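/- arXiv:1110.4778 — 4 statements merged into one kernel-verified Lean document; each statement's English description precedes it below -/
import Mathlib

section
/- Let V be a finite-dimensional real vector space, k ≥ 1, Ω an alternating (k+1)-linear form on V, K its kernel, μ : V → V/K the quotient map, and Ω̃ the induced multisymplectic form on V/K. Let W ⊆ V be a linear subspace and 1 ≤ l ≤ k. Then W is l-Lagrangian for the premultisymplectic space (V, Ω) — i.e. μ(W) = (μ(W))^{⊥,l} as subspaces of (V/K, Ω̃) — if and only if W^{⊥,l} = W + K, where W^{⊥,l} is the l-orthogonal complement of W in (V, Ω) and W + K is the subspace sum. -/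
/-- The `l`-orthogonal complement `W^{⊥,l}` of a subspace `W` with respect to an alternating
`(k+1)`-form `Ω`. -/
def lperp {V : Type*} [AddCommGroup V] [Module ℝ V] {k : ℕ}
    (Ω : V [⋀^Fin (k+1)]→ₗ[ℝ] ℝ) (W : Submodule ℝ V) (l : ℕ) : Set V :=
  {v | ∀ u : Fin k → V, (∀ i : Fin k, (i : ℕ) < l → u i ∈ W) → Ω (Fin.cons v u) = 0}

/-- The kernel `K = ker ♭_Ω` of an alternating `(k+1)`-form `Ω` on `V`, as a linear
subspace of `V`. -/
def kerSub {V : Type*} [AddCommGroup V] [Module ℝ V] {k : ℕ}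
    (Ω : V [⋀^Fin (k+1)]→ₗ[ℝ] ℝ) : Submodule ℝ V where
  carrier := {v | ∀ u : Fin k → V, Ω (Fin.cons v u) = 0}
  zero_mem' := by
    intro u
    have h := Ω.map_update_zero (Fin.cons (0:V) u) 0
    rwa [Fin.update_cons_zero] at h
  add_mem' := by
    intro a b ha hb u
    have h := Ω.map_update_add (Fin.cons a u) 0 a b
    rw [Fin.update_cons_zero, Fin.update_cons_zero, Fin.update_cons_zero] at h
    rw [h, ha u, hb u, add_zero]
  smul_mem' := by
    intro c a ha u
    have h := Ω.map_update_smul (Fin.cons a u) 0 c a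
    rw [Fin.update_cons_zero, Fin.update_cons_zero] at h
    rw [h, ha u, smul_zero]

/-- Let `V` be a finite-dimensional real vector space, `k ≥ 1`, `Ω` an
alternating `(k+1)`-form on `V`, `K` its kernel, `μ : V → V/K` the quotient map and `Ω̃`
the induced multisymplectic form on `V/K` (i.e. `μ*Ω̃ = Ω`).  A subspace `W ⊆ V` is
`l`-Lagrangian for the premultisymplectic space `(V, Ω)` — i.e. `μ(W) = (μ W)^{⊥,l}` in
`(V/K, Ω̃)` — if and only if `W^{⊥,l} = W + K`. -/
theorem lagrangian_iff_lperp_eq_sup_ker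
    (V : Type*) [AddCommGroup V] [Module ℝ V] [FiniteDimensional ℝ V]
    (k : ℕ) (hk : 1 ≤ k) (Ω : V [⋀^Fin (k+1)]→ₗ[ℝ] ℝ)
    (Ωt : (V ⧸ kerSub Ω) [⋀^Fin (k+1)]→ₗ[ℝ] ℝ)
    (hcompat : ∀ v : Fin (k+1) → V,
      Ωt (fun i => Submodule.Quotient.mk (v i)) = Ω v)
    (W : Submodule ℝ V) (l : ℕ) (hl1 : 1 ≤ l) (hlk : l ≤ k) :
    ((W.map (kerSub Ω).mkQ : Set (V ⧸ kerSub Ω)) =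
        lperp Ωt (W.map (kerSub Ω).mkQ) l) ↔
      lperp Ω W l = ((W ⊔ kerSub Ω : Submodule ℝ V) : Set V) := by
  classical
  have key : lperp Ω W l = ((kerSub Ω).mkQ) ⁻¹' (lperp Ωt (W.map (kerSub Ω).mkQ) l) := by
    ext v
    constructor
    · intro hv u hu
      have hlift : ∀ i : Fin k, ∃ w : V, (kerSub Ω).mkQ w = u i ∧ ((i : ℕ) < l → w ∈ W) := by
        intro i
        by_cases h : (i : ℕ) < l
        · obtain ⟨w, hw, hw2⟩ := hu i h
          exact ⟨w, hw2, fun _ => hw⟩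
        · obtain ⟨w, hw⟩ := Submodule.mkQ_surjective (kerSub Ω) (u i)
          exact ⟨w, hw, fun hh => absurd hh h⟩
      choose w hw1 hw2 using hlift
      have hc : (fun i => (kerSub Ω).mkQ ((Fin.cons v w : Fin (k+1) → V) i)) =
          Fin.cons ((kerSub Ω).mkQ v) u := by
        funext i
        refine Fin.cases ?_ ?_ i
        · simp
        · intro j
          simpa using hw1 j
      have h2 := hcompat (Fin.cons v w)
      simp only [← Submodule.mkQ_apply] at h2
      rw [hc] at h2
      rw [h2]
      exact hv w hw2
    · intro hv u hu
      have hc : (fun i => (kerSub Ω).mkQ ((Fin.cons v u : Fin (k+1) → V) i)) =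
          Fin.cons ((kerSub Ω).mkQ v) (fun i => (kerSub Ω).mkQ (u i)) := by
        funext i
        refine Fin.cases ?_ ?_ i <;> simp
      have h2 := hcompat (Fin.cons v u)
      simp only [← Submodule.mkQ_apply] at h2
      rw [hc] at h2
      rw [← h2]
      exact hv _ (fun i hi => ⟨u i, hu i hi, rfl⟩)
  have hpre : ((kerSub Ω).mkQ ⁻¹' ((W.map (kerSub Ω).mkQ : Submodule ℝ (V ⧸ kerSub Ω)) :
      Set (V ⧸ kerSub Ω))) = ((W ⊔ kerSub Ω : Submodule ℝ V) : Set V) := by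
    have : ((W.map (kerSub Ω).mkQ).comap (kerSub Ω).mkQ : Submodule ℝ V) = W ⊔ kerSub Ω := by
      rw [Submodule.comap_map_eq, Submodule.ker_mkQ]
    exact congrArg (fun s : Submodule ℝ V => (s : Set V)) this
  constructor
  · intro h
    rw [key, ← h, hpre]
  · intro h
    have h2 : (kerSub Ω).mkQ ⁻¹' (lperp Ωt (W.map (kerSub Ω).mkQ) l)
        = (kerSub Ω).mkQ ⁻¹' ((W.map (kerSub Ω).mkQ : Submodule ℝ (V ⧸ kerSub Ω)) :
            Set (V ⧸ kerSub Ω)) := by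
      rw [← key, h, hpre]
    have h3 := congrArg (Set.image (kerSub Ω).mkQ) h2
    rw [Set.image_preimage_eq _ (Submodule.mkQ_surjective (kerSub Ω)),
        Set.image_preimage_eq _ (Submodule.mkQ_surjective (kerSub Ω))] at h3
    exact h3.symm
end

section
/- Let V be a finite-dimensional real vector space, k ≥ 1, Ω an alternating (k+1)-linear form on V, K its kernel, μ : V → V/K the quotient map, and Ω̃ the induced multisymplectic form on V/K. Let W ⊆ V be a linear subspace and 1 ≤ l ≤ k. Then: (a) μ(W) is l-isotropic in (V/K, Ω̃), i.e. μ(W) ⊆ (μ(W))^{⊥,l}, if and only if W ⊆ W^{⊥,l}; and (b) μ(W) is l-coisotropic in (V/K, Ω̃), i.e. (μ(W))^{⊥,l} ⊆ μ(W), if and only if W^{⊥,l} ⊆ W + K. -/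
lemma mem_lperp_quot_iff {V : Type*} [AddCommGroup V] [Module ℝ V]
    {k : ℕ} (Ω : V [⋀^Fin (k+1)]→ₗ[ℝ] ℝ)
    (Ωt : (V ⧸ kerSub Ω) [⋀^Fin (k+1)]→ₗ[ℝ] ℝ)
    (hcompat : ∀ v : Fin (k+1) → V,
      Ωt (fun i => Submodule.Quotient.mk (v i)) = Ω v)
    (W : Submodule ℝ V) (l : ℕ) (v : V) :
    (kerSub Ω).mkQ v ∈ lperp Ωt (W.map (kerSub Ω).mkQ) l ↔ v ∈ lperp Ω W l := by
  constructor
  · intro h u hu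
    have h2 := h (fun i => (kerSub Ω).mkQ (u i)) (fun i hi => ⟨u i, hu i hi, rfl⟩)
    rw [← hcompat (Fin.cons v u)]
    convert h2 using 2
    ext i
    refine Fin.cases ?_ ?_ i <;> simp [Submodule.mkQ_apply]
  · intro h u hu
    have hex : ∀ i : Fin k, ∃ x : V, ((i : ℕ) < l → x ∈ W) ∧ (kerSub Ω).mkQ x = u i := by
      intro i
      by_cases hi : (i : ℕ) < l
      · obtain ⟨x, hxW, hx⟩ := hu i hi
        exact ⟨x, fun _ => hxW, hx⟩
      · obtain ⟨x, hx⟩ := (kerSub Ω).mkQ_surjective (u i)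
        exact ⟨x, fun h' => absurd h' hi, hx⟩
    choose f hfW hf using hex
    have := h f hfW
    have key : Ωt (Fin.cons ((kerSub Ω).mkQ v) u) =
        Ωt (fun i => Submodule.Quotient.mk ((Fin.cons v f : Fin (k+1) → V) i)) := by
      congr 1
      ext i
      refine Fin.cases ?_ ?_ i <;> simp [Submodule.mkQ_apply, ← hf]
    rw [key, hcompat, this]

/-- Let `V` be a finite-dimensional real vector space, `k ≥ 1`, `Ω` an
alternating `(k+1)`-form on `V`, `K` its kernel, `μ : V → V/K` the quotient map and `Ω̃`
the induced multisymplectic form on `V/K` (i.e. `μ*Ω̃ = Ω`).  For a subspace `W ⊆ V` and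
`1 ≤ l ≤ k`:
(a) `μ(W)` is `l`-isotropic in `(V/K, Ω̃)` iff `W ⊆ W^{⊥,l}`;
(b) `μ(W)` is `l`-coisotropic in `(V/K, Ω̃)` iff `W^{⊥,l} ⊆ W + K`. -/
theorem isotropic_coisotropic_quotient_iff
    (V : Type*) [AddCommGroup V] [Module ℝ V] [FiniteDimensional ℝ V]
    (k : ℕ) (hk : 1 ≤ k) (Ω : V [⋀^Fin (k+1)]→ₗ[ℝ] ℝ)
    (Ωt : (V ⧸ kerSub Ω) [⋀^Fin (k+1)]→ₗ[ℝ] ℝ)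
    (hcompat : ∀ v : Fin (k+1) → V,
      Ωt (fun i => Submodule.Quotient.mk (v i)) = Ω v)
    (W : Submodule ℝ V) (l : ℕ) (hl1 : 1 ≤ l) (hlk : l ≤ k) :
    (((W.map (kerSub Ω).mkQ : Submodule ℝ (V ⧸ kerSub Ω)) : Set (V ⧸ kerSub Ω)) ⊆
        lperp Ωt (W.map (kerSub Ω).mkQ) l ↔ (W : Set V) ⊆ lperp Ω W l) ∧
    (lperp Ωt (W.map (kerSub Ω).mkQ) l ⊆
        ((W.map (kerSub Ω).mkQ : Submodule ℝ (V ⧸ kerSub Ω)) : Set (V ⧸ kerSub Ω)) ↔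
      lperp Ω W l ⊆ ((W ⊔ kerSub Ω : Submodule ℝ V) : Set V)) := by
  constructor
  · constructor
    · intro h w hw
      exact (mem_lperp_quot_iff Ω Ωt hcompat W l w).1 (h ⟨w, hw, rfl⟩)
    · rintro h x ⟨w, hw, rfl⟩
      exact (mem_lperp_quot_iff Ω Ωt hcompat W l w).2 (h hw)
  · constructor
    · intro h v hv
      obtain ⟨w, hw, hwv⟩ := h ((mem_lperp_quot_iff Ω Ωt hcompat W l v).2 hv)
      have hk : v - w ∈ kerSub Ω := by
        simp only [Submodule.mkQ_apply] at hwv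
        exact (Submodule.Quotient.eq _).1 hwv.symm
      have : v = w + (v - w) := by abel
      rw [this]
      exact Submodule.add_mem_sup hw hk
    · intro h x hx
      obtain ⟨v, rfl⟩ := (kerSub Ω).mkQ_surjective x
      have hv : v ∈ lperp Ω W l := (mem_lperp_quot_iff Ω Ωt hcompat W l v).1 hx
      obtain ⟨w, hw, n, hn, hwn⟩ := Submodule.mem_sup.1 (h hv)
      refine ⟨w, hw, ?_⟩
      rw [← hwn]
      simp [Submodule.mkQ_apply, Submodule.Quotient.mk_add,
        (Submodule.Quotient.mk_eq_zero _).2 hn]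
end

section
/- (Pointwise nondegeneracy of the canonical multisymplectic form on the bundle of k-forms.) Let V be a finite-dimensional real vector space and let k be a natural number with 1 ≤ k ≤ dim V. Let Λ^k V* denote the space of alternating k-linear forms on V. Suppose v₀ ∈ V and α₀ ∈ Λ^k V* are such that for every choice of pairs (v₁, α₁), …, (v_k, α_k) ∈ V × Λ^k V* one has Σ_{i=0}^{k} (−1)^i · α_i(v₀, …, v_{i−1}, v_{i+1}, …, v_k) = 0 (where in the i-th summand α_i is evaluated on the k vectors obtained by omitting v_i from v₀, …, v_k). Then v₀ = 0 and α₀ = 0. -/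
/-!
Choosing all other forms to be zero isolates the summand `α₀(v₁, …, v_k)`, so `α₀ = 0`.
If `v₀ ≠ 0`, extend it to a linearly independent family `(v₀, u₁, …, u_{k-1})` and let `β` be a
`k`-form equal to `1` on it; the pairs `(v₀, β), (u₁, 0), …, (u_{k-1}, 0)` then leave the single
nonzero summand `-β(v₀, u₁, …, u_{k-1})`.
-/

open Module

theorem exists_linearIndependent_vecCons_of_lt_finrank {K V : Type*} [Field K] [AddCommGroup V]
    [Module K V] [FiniteDimensional K V] {v : V} (hv : v ≠ 0) :
    ∀ {m : ℕ}, m < finrank K V → ∃ u : Fin m → V, LinearIndependent K (Matrix.vecCons v u)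
  | 0, _ => ⟨![], by simpa using LinearIndependent.of_subsingleton (R := K) (v := ![v]) 0 hv⟩
  | m + 1, hm => by
    obtain ⟨u, hu⟩ := exists_linearIndependent_vecCons_of_lt_finrank (K := K) hv (m := m)
      (by omega)
    obtain ⟨x, hx⟩ := exists_linearIndependent_snoc_of_lt_finrank hu (by omega)
    exact ⟨Fin.snoc u x, by rwa [Matrix.vecCons, Fin.cons_snoc_eq_snoc_cons]⟩

theorem LinearIndependent.exists_alternatingMap_apply_eq_one {K V : Type*} [Field K]
    [AddCommGroup V] [Module K V] {n : ℕ} {w : Fin n → V} (hw : LinearIndependent K w) :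
    ∃ β : V [⋀^Fin n]→ₗ[K] K, β w = 1 := by
  obtain ⟨f, hf⟩ := (Fintype.linearCombination K w).exists_leftInverse_of_injective
    (LinearMap.ker_eq_bot.mpr hw.fintypeLinearCombination_injective)
  refine ⟨(Pi.basisFun K (Fin n)).det.compLinearMap f, ?_⟩
  have hfw : f ∘ w = Pi.basisFun K (Fin n) := by
    ext i : 1
    simpa using LinearMap.congr_fun hf (Pi.single i 1)
  change (Pi.basisFun K (Fin n)).det (f ∘ w) = 1
  rw [hfw, Basis.det_self]

theorem exists_curryLeft_ne_zero {K V : Type*} [Field K] [AddCommGroup V] [Module K V]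
    [FiniteDimensional K V] {m : ℕ} (hm : m + 1 ≤ finrank K V) {v : V} (hv : v ≠ 0) :
    ∃ β : V [⋀^Fin (m + 1)]→ₗ[K] K, β.curryLeft v ≠ 0 := by
  obtain ⟨u, hu⟩ := exists_linearIndependent_vecCons_of_lt_finrank hv hm
  obtain ⟨β, hβ⟩ := hu.exists_alternatingMap_apply_eq_one
  exact ⟨β, fun h => by simpa [hβ] using DFunLike.congr_fun h u⟩

/-- (Pointwise nondegeneracy of the canonical multisymplectic form on the
bundle of `k`-forms.)  Let `V` be a finite-dimensional real vector space and `1 ≤ k ≤ dim V`.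
Suppose `v₀ ∈ V` and `α₀ ∈ Λᵏ V*` are such that for every choice of pairs
`(v₁, α₁), …, (v_k, α_k) ∈ V × Λᵏ V*` one has
`Σ_{i=0}^{k} (−1)ⁱ αᵢ(v₀, …, v̂ᵢ, …, v_k) = 0`
(the `i`-th summand evaluating `αᵢ` on the `k` vectors obtained by omitting `vᵢ`).
Then `v₀ = 0` and `α₀ = 0`. -/
theorem canonical_form_nondegenerate
    (V : Type*) [AddCommGroup V] [Module ℝ V] [FiniteDimensional ℝ V]
    (k : ℕ) (hk1 : 1 ≤ k) (hk2 : k ≤ Module.finrank ℝ V)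
    (v₀ : V) (α₀ : V [⋀^Fin k]→ₗ[ℝ] ℝ)
    (h : ∀ q : Fin k → V × (V [⋀^Fin k]→ₗ[ℝ] ℝ),
      ∑ i : Fin (k+1),
        ((-1 : ℝ) ^ (i : ℕ)) *
          ((Fin.cons (v₀, α₀) q : Fin (k+1) → V × (V [⋀^Fin k]→ₗ[ℝ] ℝ)) i).2
            (fun j : Fin k =>
              ((Fin.cons (v₀, α₀) q : Fin (k+1) → V × (V [⋀^Fin k]→ₗ[ℝ] ℝ))
                (i.succAbove j)).1) = 0) :
    v₀ = 0 ∧ α₀ = 0 := by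
  obtain ⟨m, rfl⟩ : ∃ m, k = m + 1 := ⟨k - 1, by omega⟩
  have hα : α₀ = 0 := by
    ext w
    simpa [Fin.sum_univ_succ] using h fun i => (w i, 0)
  subst hα
  refine ⟨?_, rfl⟩
  by_contra hv
  obtain ⟨β, hβ⟩ := exists_curryLeft_ne_zero hk2 hv
  refine hβ (AlternatingMap.ext fun u => ?_)
  let q : Fin (m + 1) → V × (V [⋀^Fin (m + 1)]→ₗ[ℝ] ℝ) := Fin.cons (v₀, β) fun j => (u j, 0)
  have hargs : (fun j => ((Fin.cons (v₀, 0) q : Fin (m + 2) → V × _) (Fin.succAbove 1 j)).1) =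
      Matrix.vecCons v₀ u := by
    ext j
    cases j using Fin.cases <;> simp [q]
  simpa [Fin.sum_univ_succ, hargs, q] using h q
end

section
/- (Pointwise nondegeneracy of the canonical multisymplectic form on the bundle of 2-horizontal m-forms.) Let V and U be finite-dimensional real vector spaces, p : V → U a surjective linear map, and m := dim U ≥ 1. Let A ⊆ Λ^m V* be the subspace of 2-horizontal alternating m-forms, i.e. those α ∈ Λ^m V* such that α(w₁, …, w_m) = 0 whenever at least two of the arguments w₁, …, w_m lie in ker p. Suppose v₀ ∈ V and α₀ ∈ A are such that for every choice of pairs (v₁, α₁), …, (v_m, α_m) ∈ V × A one has Σ_{i=0}^{m} (−1)^i · α_i(v₀, …, v_{i−1}, v_{i+1}, …, v_m) = 0 (where in the i-th summand α_i is evaluated on the m vectors obtained by omitting v_i from v₀, …, v_m). Then v₀ = 0 and α₀ = 0. -/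
/-- The set of `2`-horizontal alternating `m`-forms with respect to a linear map `p`:
those forms vanishing whenever at least two arguments lie in `ker p`. -/
def twoHorizontal {V U : Type*} [AddCommGroup V] [Module ℝ V] [AddCommGroup U] [Module ℝ U]
    (p : V →ₗ[ℝ] U) (m : ℕ) : Set (V [⋀^Fin m]→ₗ[ℝ] ℝ) :=
  {α | ∀ w : Fin m → V,
    (∃ i j : Fin m, i ≠ j ∧ p (w i) = 0 ∧ p (w j) = 0) → α w = 0}

/-!
Taking all `αᵢ = 0` for `i ≥ 1` leaves only the term `α₀(v₁, …, v_m)`, so `α₀ = 0`. If `v₀ ≠ 0`,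
it suffices to find a `2`-horizontal `β` and vectors with `β(v₀, v₂, …, v_m) ≠ 0`. Pull back a
volume form of `U` along a surjection `q : V → U` with `q v₀ ≠ 0` mapping `ker p` into a line:
`q = p` if `p v₀ ≠ 0`, and otherwise `p` tilted by a rank-one map. Any two vectors of `ker p`
then map to linearly dependent vectors, so the pullback is `2`-horizontal.
-/

open Function Submodule

theorem not_linearIndependent_of_mem_span_singleton {ι K M : Type*} [CommRing K] [Nontrivial K]
    [AddCommGroup M] [Module K M] {v : ι → M} {u : M} {i j : ι} (hij : i ≠ j)
    (hi : v i ∈ K ∙ u) (hj : v j ∈ K ∙ u) : ¬LinearIndependent K v := by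
  intro hv
  obtain ⟨a, ha⟩ := mem_span_singleton.mp hi
  obtain ⟨b, hb⟩ := mem_span_singleton.mp hj
  have hab : b • v i + (-a) • v j = 0 := by
    rw [← ha, ← hb, smul_smul, smul_smul, mul_comm, neg_mul, neg_smul, add_neg_cancel]
  obtain ⟨-, ha0⟩ := (LinearIndepOn.pair_iff v hij).mp (hv.linearIndepOn _) b (-a) hab
  exact hv.ne_zero i (by rw [← ha, neg_eq_zero.mp ha0, zero_smul])

theorem Module.Basis.det_update {ι R M : Type*} [Fintype ι] [DecidableEq ι] [CommRing R]
    [AddCommGroup M] [Module R M] (e : Module.Basis ι R M) (i : ι) (x : M) :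
    e.det (update e i x) = e.repr x i := by
  rw [det_apply, toMatrix_update, toMatrix_self, ← Matrix.cramer_apply, Matrix.cramer_one]
  rfl

theorem exists_alternatingMap_apply_ne_zero {K U : Type*} [Field K] [AddCommGroup U]
    [Module K U] [FiniteDimensional K U] {m : ℕ} [NeZero m] (hm : Module.finrank K U = m)
    {x : U} (hx : x ≠ 0) :
    ∃ (vol : U [⋀^Fin m]→ₗ[K] K) (u : Fin m → U), u 0 = x ∧ vol u ≠ 0 := by
  let b := (Module.finBasis K U).reindex (finCongr hm)
  obtain ⟨i, hi⟩ : ∃ i, b.repr x i ≠ 0 :=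
    not_forall.mp fun h => b.repr.map_ne_zero_iff.mpr hx (Finsupp.ext h)
  let c := b.reindex (Equiv.swap i 0)
  refine ⟨c.det, update c 0 x, update_self .., ?_⟩
  rwa [c.det_update, Module.Basis.repr_reindex_apply, Equiv.symm_swap, Equiv.swap_apply_right]

/-- If `p v = 0`, tilting `p` by a rank-one map `f ⊗ u` with `f v ≠ 0` makes `v` visible while
keeping the map surjective and sending `ker p` into the line through `u`. -/
theorem exists_surjective_apply_ne_zero_map_ker_le_span {K V U : Type*} [Field K]
    [AddCommGroup V] [Module K V] [AddCommGroup U] [Module K U] [Nontrivial U]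
    (p : V →ₗ[K] U) (hp : Surjective p) {v : V} (hv : v ≠ 0) :
    ∃ (q : V →ₗ[K] U) (u : U), Surjective q ∧ q v ≠ 0 ∧ ∀ w, p w = 0 → q w ∈ K ∙ u := by
  by_cases hpv : p v = 0
  · obtain ⟨f, hf⟩ : ∃ f : Module.Dual K V, f v ≠ 0 :=
      not_forall.mp fun h => hv ((Module.forall_dual_apply_eq_zero_iff K v).mp h)
    obtain ⟨u, hu⟩ := exists_ne (0 : U)
    refine ⟨p + f.smulRight u, u, fun y => ?_, by simp [hpv, hf, hu], fun w hw => ?_⟩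
    · obtain ⟨w, rfl⟩ := hp y
      refine ⟨w - (f w / f v) • v, ?_⟩
      simp [hpv, hf]
    · exact mem_span_singleton.mpr ⟨f w, by simp [hw]⟩
  · exact ⟨p, 0, hp, hpv, fun w hw => by simp [hw]⟩

theorem compLinearMap_mem_twoHorizontal {V U : Type*} [AddCommGroup V] [Module ℝ V]
    [AddCommGroup U] [Module ℝ U] (p : V →ₗ[ℝ] U) {m : ℕ} (vol : U [⋀^Fin m]→ₗ[ℝ] ℝ)
    {q : V →ₗ[ℝ] U} {u : U} (hq : ∀ w, p w = 0 → q w ∈ ℝ ∙ u) :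
    vol.compLinearMap q ∈ twoHorizontal p m := by
  rintro w ⟨i, j, hij, hi, hj⟩
  exact vol.map_linearDependent _
    (not_linearIndependent_of_mem_span_singleton hij (hq _ hi) (hq _ hj))

theorem exists_mem_twoHorizontal_apply_ne_zero {V U : Type*} [AddCommGroup V] [Module ℝ V]
    [AddCommGroup U] [Module ℝ U] [FiniteDimensional ℝ U] (p : V →ₗ[ℝ] U) (hp : Surjective p)
    {m : ℕ} [NeZero m] (hm : Module.finrank ℝ U = m) {v : V} (hv : v ≠ 0) :
    ∃ β ∈ twoHorizontal p m, ∃ w : Fin m → V, w 0 = v ∧ β w ≠ 0 := by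
  have : Nontrivial U := Module.nontrivial_of_finrank_pos (hm ▸ NeZero.pos m)
  obtain ⟨q, u, hq, hqv, hker⟩ := exists_surjective_apply_ne_zero_map_ker_le_span p hp hv
  obtain ⟨vol, y, hy0, hvol⟩ := exists_alternatingMap_apply_ne_zero hm hqv
  have hlift : q ∘ update (surjInv hq ∘ y) 0 v = y := by
    rw [comp_update, ← comp_assoc, (rightInverse_surjInv hq).comp_eq_id, id_comp, ← hy0,
      update_eq_self]
  exact ⟨vol.compLinearMap q, compLinearMap_mem_twoHorizontal p vol hker,
    update (surjInv hq ∘ y) 0 v, update_self ..,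
    by rwa [vol.compLinearMap_apply, ← comp_def, hlift]⟩

/-- Up to sign, the multisymplectic form `Ω₂ = -dΘ` evaluated on the tangent vectors `(vᵢ, αᵢ)`. -/
def canonicalForm {R M : Type*} [CommRing R] [AddCommGroup M] [Module R M] {m : ℕ}
    (x : Fin (m + 1) → M × (M [⋀^Fin m]→ₗ[R] R)) : R :=
  ∑ i : Fin (m + 1), (-1 : R) ^ (i : ℕ) * (x i).2 fun j => (x (i.succAbove j)).1

theorem canonicalForm_cons_of_forms_eq_zero {R M : Type*} [CommRing R] [AddCommGroup M]
    [Module R M] {m : ℕ} (v : M) (α : M [⋀^Fin m]→ₗ[R] R) (w : Fin m → M) :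
    canonicalForm (Fin.cons (v, α) fun j => (w j, 0)) = α w := by
  simp [canonicalForm, Fin.sum_univ_succ]

theorem canonicalForm_cons_single {R M : Type*} [CommRing R] [AddCommGroup M] [Module R M]
    {n : ℕ} (β : M [⋀^Fin (n + 1)]→ₗ[R] R) (w : Fin (n + 1) → M) :
    canonicalForm (Fin.cons (w 0, 0) fun j => (w j, if j = 0 then β else 0)) = -β w := by
  simp only [canonicalForm, Fin.sum_univ_succ, Fin.coe_ofNat_eq_mod, Nat.zero_mod, pow_zero,
    Fin.cons_zero, Fin.zero_succAbove, Fin.cons_succ, AlternatingMap.zero_apply, mul_zero,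
    Fin.val_succ, zero_add, pow_one, ↓reduceIte, Fin.succ_zero_eq_one, neg_mul, one_mul,
    Fin.succ_ne_zero, Finset.sum_const_zero, add_zero, neg_inj]
  congr 1
  funext k
  cases k using Fin.cases <;> rfl

theorem canonical_form_nondegenerate_twoHorizontal_general
    (V U : Type*) [AddCommGroup V] [Module ℝ V]
    [AddCommGroup U] [Module ℝ U] [FiniteDimensional ℝ U]
    (p : V →ₗ[ℝ] U) (hp : Function.Surjective p)
    (m : ℕ) (hm : m = Module.finrank ℝ U) (hm1 : 1 ≤ m)
    (v₀ : V) (α₀ : V [⋀^Fin m]→ₗ[ℝ] ℝ)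
    (h : ∀ q : Fin m → V × (V [⋀^Fin m]→ₗ[ℝ] ℝ),
      (∀ j : Fin m, (q j).2 ∈ twoHorizontal p m) →
      ∑ i : Fin (m+1),
        ((-1 : ℝ) ^ (i : ℕ)) *
          ((Fin.cons (v₀, α₀) q : Fin (m+1) → V × (V [⋀^Fin m]→ₗ[ℝ] ℝ)) i).2
            (fun j : Fin m =>
              ((Fin.cons (v₀, α₀) q : Fin (m+1) → V × (V [⋀^Fin m]→ₗ[ℝ] ℝ))
                (i.succAbove j)).1) = 0) :
    v₀ = 0 ∧ α₀ = 0 := by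
  have h' : ∀ q : Fin m → V × (V [⋀^Fin m]→ₗ[ℝ] ℝ), (∀ j, (q j).2 ∈ twoHorizontal p m) →
      canonicalForm (Fin.cons (v₀, α₀) q) = 0 := h
  have hzero : (0 : V [⋀^Fin m]→ₗ[ℝ] ℝ) ∈ twoHorizontal p m := fun _ _ => rfl
  have hα : α₀ = 0 := AlternatingMap.ext fun w => by
    simpa [canonicalForm_cons_of_forms_eq_zero] using h' (fun j => (w j, 0)) fun _ => hzero
  refine ⟨by_contra fun hv => ?_, hα⟩
  obtain ⟨n, rfl⟩ : ∃ n, m = n + 1 := ⟨m - 1, by omega⟩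
  obtain ⟨β, hβ, w, rfl, hβw⟩ := exists_mem_twoHorizontal_apply_ne_zero p hp hm.symm hv
  have hw := h' (fun j => (w j, if j = 0 then β else 0)) fun j => by
    rcases eq_or_ne j 0 with rfl | hj
    exacts [by simpa using hβ, by simpa [hj] using hzero]
  rw [hα, canonicalForm_cons_single] at hw
  exact hβw (neg_eq_zero.mp hw)

/-- (Pointwise nondegeneracy of the canonical multisymplectic form on the
bundle of `2`-horizontal `m`-forms.)  Let `V`, `U` be finite-dimensional real vector spaces,
`p : V → U` a surjective linear map, and `m = dim U ≥ 1`.  Let `A ⊆ Λᵐ V*` be the subspace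
of `2`-horizontal `m`-forms (those vanishing whenever two arguments lie in `ker p`).
Suppose `v₀ ∈ V` and `α₀ ∈ A` are such that for every choice of pairs
`(v₁, α₁), …, (v_m, α_m) ∈ V × A` one has
`Σ_{i=0}^{m} (−1)ⁱ αᵢ(v₀, …, v̂ᵢ, …, v_m) = 0`
(the `i`-th summand evaluating `αᵢ` on the `m` vectors obtained by omitting `vᵢ`).
Then `v₀ = 0` and `α₀ = 0`. -/
theorem canonical_form_nondegenerate_twoHorizontal
    (V U : Type*) [AddCommGroup V] [Module ℝ V] [FiniteDimensional ℝ V]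
    [AddCommGroup U] [Module ℝ U] [FiniteDimensional ℝ U]
    (p : V →ₗ[ℝ] U) (hp : Function.Surjective p)
    (m : ℕ) (hm : m = Module.finrank ℝ U) (hm1 : 1 ≤ m)
    (v₀ : V) (α₀ : V [⋀^Fin m]→ₗ[ℝ] ℝ) (hα₀ : α₀ ∈ twoHorizontal p m)
    (h : ∀ q : Fin m → V × (V [⋀^Fin m]→ₗ[ℝ] ℝ),
      (∀ j : Fin m, (q j).2 ∈ twoHorizontal p m) →
      ∑ i : Fin (m+1),
        ((-1 : ℝ) ^ (i : ℕ)) *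
          ((Fin.cons (v₀, α₀) q : Fin (m+1) → V × (V [⋀^Fin m]→ₗ[ℝ] ℝ)) i).2
            (fun j : Fin m =>
              ((Fin.cons (v₀, α₀) q : Fin (m+1) → V × (V [⋀^Fin m]→ₗ[ℝ] ℝ))
                (i.succAbove j)).1) = 0) :
    v₀ = 0 ∧ α₀ = 0 :=
  canonical_form_nondegenerate_twoHorizontal_general V U p hp m hm hm1 v₀ α₀ h
end
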